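/- arXiv:2305.17994 — 2 statements merged into one kernel-verified Lean document; each statement's English description precedes it below -/
import Mathlib

section
/- Let N be a natural number, and let s be a real number whose fractional part is nonzero (Int.fract s ≠ 0). Define the semi-Lagrangian translation matrix A(s) : Matrix (ZMod N) (ZMod N) ℝ by A(s)_{k,l} = (1 − fract(−s))·[l = k + ⌊−s⌋] + fract(−s)·[l = k + ⌊−s⌋ + 1], where [P] denotes the indicator (1 if P holds, 0 otherwise) and the integers ⌊−s⌋, ⌊−s⌋+1 are cast into ZMod N. Then the transpose of A(s) equals A(−s), i.e. (A(s))ᵀ = A(−s). -/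
open Matrix

/-- The semi-Lagrangian translation matrix on a periodic grid of `N` cells with
shift parameter `s`: entries `1 - fract(-s)` on the diagonal offset by `⌊-s⌋`
and `fract(-s)` on the diagonal offset by `⌊-s⌋ + 1`. -/
noncomputable def semiLagMatrix (N : ℕ) (s : ℝ) : Matrix (ZMod N) (ZMod N) ℝ :=
  fun k l =>
    (1 - Int.fract (-s)) * (if l = k + ((⌊-s⌋ : ℤ) : ZMod N) then 1 else 0)
      + Int.fract (-s) * (if l = k + ((⌊-s⌋ : ℤ) : ZMod N) + 1 then 1 else 0)

/-- The transpose of the semi-Lagrangian translation matrix for shift `s` is the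
semi-Lagrangian translation matrix for shift `-s`. -/
theorem semiLagMatrix_transpose (N : ℕ) (s : ℝ) (hs : Int.fract s ≠ 0) :
    (semiLagMatrix N s)ᵀ = semiLagMatrix N (-s) := by
  have hfs : Int.fract (-s) = 1 - Int.fract s := Int.fract_neg hs
  have hfloorR : ((⌊-s⌋ : ℤ) : ℝ) = -(⌊s⌋ : ℝ) - 1 := by
    have h1 : Int.fract (-s) = -s - ⌊-s⌋ := Int.self_sub_floor (-s)
    have h2 : Int.fract s = s - ⌊s⌋ := Int.self_sub_floor s
    rw [h1, h2] at hfs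
    linarith
  have hfloor : (⌊-s⌋ : ℤ) = -⌊s⌋ - 1 := by exact_mod_cast hfloorR
  ext k l
  have h1 : (k = l + ((-⌊s⌋ - 1 : ℤ) : ZMod N)) ↔ (l = k + ((⌊s⌋ : ℤ) : ZMod N) + 1) := by
    push_cast
    constructor <;> (intro h; subst h; ring)
  have h2 : (k = l + ((-⌊s⌋ - 1 : ℤ) : ZMod N) + 1) ↔ (l = k + ((⌊s⌋ : ℤ) : ZMod N)) := by
    push_cast
    constructor <;> (intro h; subst h; ring)
  simp only [transpose_apply, semiLagMatrix, neg_neg, hfs, hfloor, h1, h2]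
  ring
end

section
/- Let N be a positive natural number, Δx > 0, f : ZMod N → ℝ, and define the periodic piecewise constant function F : ℝ → ℝ by F(x) = f(⌊x/Δx⌋ mod N), where ⌊·⌋ is the floor and the integer ⌊x/Δx⌋ is cast into ZMod N. Let δ ∈ ℝ, and set m = ⌊−δ/Δx⌋ and θ = Int.fract(−δ/Δx). Then for every i ∈ ℤ, (1/Δx)·∫_{iΔx}^{(i+1)Δx} F(x − δ) dx = (1 − θ)·f((i + m) mod N) + θ·f((i + m + 1) mod N). -/
/-! Rescaling by `Δx` turns the cell average into `∫ u in a..a+1, f ⌊u⌋` with `a = i - δ/Δx`.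
The unit interval `[a, a + 1]` meets exactly two cells of the integer grid, `⌊a⌋` and `⌊a⌋ + 1`,
with overlaps of length `1 - fract a` and `fract a`, and `fract a = fract (-δ/Δx)`. -/

open MeasureTheory Set

theorem eqOn_comp_floor_Ioo {α : Type*} (g : ℤ → α) {n : ℤ} {a b : ℝ} (hna : n ≤ a)
    (hb : b ≤ n + 1) : EqOn (fun u : ℝ => g ⌊u⌋) (fun _ => g n) (Ioo a b) := fun u hu => by
  simp only [Int.floor_eq_iff.mpr ⟨hna.trans hu.1.le, hu.2.trans_le hb⟩]

section FloorStep

variable {E : Type*} [NormedAddCommGroup E] (g : ℤ → E)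

theorem intervalIntegrable_comp_floor_of_le {n : ℤ} {a b : ℝ} (hna : n ≤ a) (hab : a ≤ b)
    (hb : b ≤ n + 1) : IntervalIntegrable (fun u : ℝ => g ⌊u⌋) volume a b :=
  intervalIntegrable_const.congr_uIoo
    (uIoo_of_le hab ▸ (eqOn_comp_floor_Ioo g hna hb).symm)

theorem integral_comp_floor_of_le [NormedSpace ℝ E] [CompleteSpace E] {n : ℤ} {a b : ℝ}
    (hna : n ≤ a) (hab : a ≤ b) (hb : b ≤ n + 1) : ∫ u in a..b, g ⌊u⌋ = (b - a) • g n := by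
  rw [intervalIntegral.integral_congr_Ioo_of_le hab (eqOn_comp_floor_Ioo g hna hb),
    intervalIntegral.integral_const]

theorem integral_comp_floor_self_add_one [NormedSpace ℝ E] [CompleteSpace E] (a : ℝ) :
    ∫ u in a..a + 1, g ⌊u⌋ = (1 - Int.fract a) • g ⌊a⌋ + Int.fract a • g (⌊a⌋ + 1) := by
  have h₀ : (⌊a⌋ : ℝ) ≤ a := Int.floor_le a
  have h₁ : a ≤ ⌊a⌋ + 1 := (Int.lt_floor_add_one a).le
  have h₂ : a + 1 ≤ ⌊a⌋ + 1 + 1 := by linarith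
  have hcast : ((⌊a⌋ + 1 : ℤ) : ℝ) = ⌊a⌋ + 1 := by push_cast; rfl
  rw [← intervalIntegral.integral_add_adjacent_intervals
      (intervalIntegrable_comp_floor_of_le g h₀ h₁ le_rfl)
      (intervalIntegrable_comp_floor_of_le g hcast.le (by linarith) (hcast ▸ h₂)),
    integral_comp_floor_of_le g h₀ h₁ le_rfl,
    integral_comp_floor_of_le g hcast.le (by linarith) (hcast ▸ h₂), Int.fract]
  congr 2 <;> ring

end FloorStep

theorem cell_average_of_translate_general (N : ℕ)
    (Δx : ℝ) (hΔx : 0 < Δx) (f : ZMod N → ℝ)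
    (F : ℝ → ℝ) (hF : ∀ x : ℝ, F x = f ((⌊x / Δx⌋ : ℤ) : ZMod N))
    (δ : ℝ) (m : ℤ) (hm : m = ⌊-δ / Δx⌋) (θ : ℝ) (hθ : θ = Int.fract (-δ / Δx)) :
    ∀ i : ℤ,
      (1 / Δx) * ∫ x in (i * Δx : ℝ)..((i + 1) * Δx : ℝ), F (x - δ)
        = (1 - θ) * f ((↑(i + m) : ZMod N)) + θ * f ((↑(i + m + 1) : ZMod N)) := by
  intro i
  have hrescale : ∀ t : ℝ, F (t * Δx - δ) = f ((⌊t + -δ / Δx⌋ : ℤ) : ZMod N) := fun t => by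
    rw [hF]; congr 3; field_simp; ring
  have hcell : (1 / Δx) * ∫ x in (i * Δx : ℝ)..((i + 1) * Δx : ℝ), F (x - δ)
      = ∫ u in (i + -δ / Δx)..(i + -δ / Δx) + 1, f ((⌊u⌋ : ℤ) : ZMod N) := by
    rw [one_div, ← smul_eq_mul,
      ← intervalIntegral.integral_comp_mul_right (fun x => F (x - δ)) hΔx.ne']
    simp only [hrescale]
    rw [intervalIntegral.integral_comp_add_right (fun u => f ((⌊u⌋ : ℤ) : ZMod N))]
    rw [add_right_comm]
  rw [hcell, integral_comp_floor_self_add_one (fun k : ℤ => f k), Int.floor_intCast_add,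
    Int.fract_intCast_add, ← hm, ← hθ, smul_eq_mul, smul_eq_mul, add_assoc]

/-- The exact cell average of a translated periodic piecewise-constant grid
function equals the two-point semi-Lagrangian interpolation formula: if
`F(x) = f(⌊x/Δx⌋ mod N)` and `−δ/Δx = m + θ` with `m = ⌊−δ/Δx⌋` and
`θ = fract(−δ/Δx)`, then the average of `F(· − δ)` over the `i`-th cell is
`(1 − θ)·f(i + m) + θ·f(i + m + 1)`. -/
theorem cell_average_of_translate (N : ℕ) (hN : 0 < N)
    (Δx : ℝ) (hΔx : 0 < Δx) (f : ZMod N → ℝ)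
    (F : ℝ → ℝ) (hF : ∀ x : ℝ, F x = f ((⌊x / Δx⌋ : ℤ) : ZMod N))
    (δ : ℝ) (m : ℤ) (hm : m = ⌊-δ / Δx⌋) (θ : ℝ) (hθ : θ = Int.fract (-δ / Δx)) :
    ∀ i : ℤ,
      (1 / Δx) * ∫ x in (i * Δx : ℝ)..((i + 1) * Δx : ℝ), F (x - δ)
        = (1 - θ) * f ((↑(i + m) : ZMod N)) + θ * f ((↑(i + m + 1) : ZMod N)) :=
  cell_average_of_translate_general N Δx hΔx f F hF δ m hm θ hθ
end
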